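/- Suppose the passwords are partitioned into equivalence sets by a classification map cls : Fin n → Fin m such that any two passwords in the same equivalence set have the same probability and the same hash cost (cls i = cls j implies p i = p j and k i = k j), and suppose the equivalence sets are indexed in nonincreasing bang-for-buck order: whenever c ≤ c', i ∈ cls⁻¹(c) and j ∈ cls⁻¹(c'), one has p i·k j ≥ p j·k i. Then there exists an optimal attacker strategy (π, B) whose budget B is a prefix sum of equivalence-set sizes, i.e., B = Σ_{c < t} |cls⁻¹(c)| for some t ≤ m. -/

import Mathlib

open Finset

/-- Success probability λ(π,B): sum of probabilities of the first B guesses. -/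
noncomputable def lam (n : ℕ) (p : Fin n → ℝ) (π : Equiv.Perm (Fin n)) (B : ℕ) : ℝ :=
  ∑ t : Fin n, if t.val < B then p (π t) else 0

/-- Attacker utility U(π,B) = v·λ(π,B) − Σ_{t<B} k(π(t))·(1 − λ(π,t)). -/
noncomputable def U (n : ℕ) (p k : Fin n → ℝ) (v : ℝ) (π : Equiv.Perm (Fin n)) (B : ℕ) : ℝ :=
  v * lam n p π B - ∑ t : Fin n, if t.val < B then k (π t) * (1 - lam n p π t.val) else 0

/-! Take an optimal strategy whose budget is largest among all optimal ones. Exchanging two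
consecutive guesses so that the one of larger bang-for-buck comes first never lowers the utility,
so we may also assume that the last guess `e` has the largest class among the guesses. Guessing
`e` was worthwhile (its marginal utility is nonnegative); an unguessed password of class at most
that of `e` has at least its bang-for-buck, so guessing it next would be worthwhile too and give an
optimal strategy with a larger budget. Hence the guessed passwords are exactly those of class at
most that of `e`. -/

lemma exists_forall_le_of_max_budget {β γ : Type*} [Fintype β] [Nonempty β] [LinearOrder γ]
    (f : β → ℕ → γ) (n : ℕ) :
    ∃ a B, B ≤ n ∧ (∀ a' B', B' ≤ n → f a' B' ≤ f a B) ∧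
      ∀ a' B', B' ≤ n → f a' B' = f a B → B' ≤ B := by
  obtain ⟨⟨a, B⟩, hmem, hmax⟩ := (univ ×ˢ range (n + 1)).exists_max_image
    (fun q => toLex (f q.1 q.2, q.2)) ⟨(Classical.arbitrary β, 0), by simp⟩
  have hlex : ∀ a' B', B' ≤ n → f a' B' ≤ f a B ∧ (f a' B' = f a B → B' ≤ B) := fun a' B' h =>
    Prod.Lex.toLex_le_toLex'.mp (hmax (a', B') (by simp; omega))
  exact ⟨a, B, by simp at hmem; omega, fun a' B' h => (hlex a' B' h).1,
    fun a' B' h => (hlex a' B' h).2⟩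

lemma marginal_nonneg_of_ratio_le {v L p₁ k₁ p₂ k₂ : ℝ} (hv : 0 ≤ v) (hp₁ : 0 ≤ p₁)
    (hk₁ : 0 < k₁) (hk₂ : 0 ≤ k₂) (hratio : p₁ * k₂ ≤ p₂ * k₁)
    (h : 0 ≤ v * p₁ - k₁ * (1 - L)) :
    0 ≤ v * p₂ - k₂ * (1 - (L + p₁)) := by
  refine nonneg_of_mul_nonneg_right ?_ hk₁
  have key : k₁ * (v * p₂ - k₂ * (1 - (L + p₁)))
      = v * (p₂ * k₁ - p₁ * k₂) + k₂ * (v * p₁ - k₁ * (1 - L)) + k₂ * k₁ * p₁ := by ring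
  rw [key]
  exact add_nonneg (add_nonneg (mul_nonneg hv (sub_nonneg.mpr hratio)) (mul_nonneg hk₂ h))
    (by positivity)

lemma card_filter_symm_val_lt {n B : ℕ} (π : Equiv.Perm (Fin n)) (hB : B ≤ n) :
    #{i | (π.symm i).val < B} = B := by
  rw [card_equiv π.symm (t := univ.filter fun t : Fin n => t.val < B) (by simp),
    Fin.card_filter_val_lt]
  omega

lemma card_filter_le_eq_sum_card_fiber {ι : Type*} [Fintype ι] {m : ℕ} (cls : ι → Fin m)
    (c : Fin m) :
    #{i | cls i ≤ c} = ∑ c' ∈ univ.filter (fun c' : Fin m => c'.val < c.val + 1),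
      #{i | cls i = c'} := by
  rw [card_eq_sum_card_fiberwise (f := cls) (t := univ.filter fun c' : Fin m => c'.val < c.val + 1)
    (fun i hi => by simp at hi ⊢; omega)]
  refine sum_congr rfl fun c' hc' => ?_
  rw [filter_filter]
  congr 1
  refine filter_congr fun i _ => ?_
  simp only [mem_filter, mem_univ, true_and] at hc'
  simp only [and_iff_right_iff_imp]
  rintro rfl
  exact Fin.le_def.mpr (by omega)

lemma Fin.sum_ite_val_lt_succ {n B : ℕ} (f : Fin n → ℝ) (hB : B < n) :
    (∑ t : Fin n, if t.val < B + 1 then f t else 0)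
      = (∑ t : Fin n, if t.val < B then f t else 0) + f ⟨B, hB⟩ := by
  classical
  simp only [← Finset.sum_filter]
  have : univ.filter (fun t : Fin n => t.val < B + 1)
      = insert ⟨B, hB⟩ (univ.filter fun t : Fin n => t.val < B) := by
    ext t
    simp only [mem_filter, mem_univ, true_and, mem_insert, Fin.ext_iff]
    omega
  rw [this, sum_insert (by simp), add_comm]

section Utility

variable {n : ℕ} (p k : Fin n → ℝ) (v : ℝ)

noncomputable def marginalUtility (π : Equiv.Perm (Fin n)) (t : Fin n) : ℝ :=
  v * p (π t) - k (π t) * (1 - lam n p π t)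

lemma U_eq_sum_marginalUtility (π : Equiv.Perm (Fin n)) (B : ℕ) :
    U n p k v π B = ∑ t : Fin n, if t.val < B then marginalUtility p k v π t else 0 := by
  simp only [U, lam, mul_sum, ← sum_sub_distrib, marginalUtility]
  refine sum_congr rfl fun t _ => ?_
  split_ifs <;> ring

lemma lam_succ (π : Equiv.Perm (Fin n)) {B : ℕ} (hB : B < n) :
    lam n p π (B + 1) = lam n p π B + p (π ⟨B, hB⟩) :=
  Fin.sum_ite_val_lt_succ _ hB

lemma U_succ (π : Equiv.Perm (Fin n)) {B : ℕ} (hB : B < n) :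
    U n p k v π (B + 1) = U n p k v π B + marginalUtility p k v π ⟨B, hB⟩ := by
  simp only [U_eq_sum_marginalUtility]
  exact Fin.sum_ite_val_lt_succ _ hB

lemma lam_congr_of_eq_below {σ π : Equiv.Perm (Fin n)} {B : ℕ}
    (h : ∀ t : Fin n, t.val < B → σ t = π t) {c : ℕ} (hc : c ≤ B) :
    lam n p σ c = lam n p π c :=
  sum_congr rfl fun t _ => by
    split_ifs with ht
    · rw [h t (by omega)]
    · rfl

lemma U_congr_of_eq_below {σ π : Equiv.Perm (Fin n)} {B : ℕ}
    (h : ∀ t : Fin n, t.val < B → σ t = π t) :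
    U n p k v σ B = U n p k v π B := by
  simp only [U_eq_sum_marginalUtility, marginalUtility]
  refine sum_congr rfl fun t _ => ?_
  split_ifs with ht
  · rw [h t ht, lam_congr_of_eq_below p h ht.le]
  · rfl

lemma lam_swap_trans {a b : Fin n} {c : ℕ} (hab : a.val < c ↔ b.val < c)
    (π : Equiv.Perm (Fin n)) :
    lam n p ((Equiv.swap a b).trans π) c = lam n p π c := by
  unfold lam
  rw [← Equiv.sum_comp (Equiv.swap a b)]
  refine sum_congr rfl fun t _ => ?_
  simp only [Equiv.trans_apply, Equiv.swap_apply_self]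
  congr 1
  rcases eq_or_ne t a with rfl | hta
  · simp [hab]
  rcases eq_or_ne t b with rfl | htb
  · simp [hab]
  · rw [Equiv.swap_apply_of_ne_of_ne hta htb]

lemma U_swap_trans_of_val_succ_eq {a b : Fin n} (hab : b.val = a.val + 1) {B : ℕ}
    (hbB : b.val < B) (π : Equiv.Perm (Fin n)) :
    U n p k v ((Equiv.swap a b).trans π) B
      = U n p k v π B + (k (π a) * p (π b) - k (π b) * p (π a)) := by
  classical
  set σ := (Equiv.swap a b).trans π
  have hne : a ≠ b := fun h => by rw [h] at hab; omega
  have hlam : ∀ c : ℕ, c ≠ b.val → lam n p σ c = lam n p π c :=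
    fun c hc => lam_swap_trans p (by omega) π
  have hlam_b : ∀ τ : Equiv.Perm (Fin n), lam n p τ b = lam n p τ a + p (τ a) := by
    intro τ
    rw [hab, lam_succ p τ (by omega)]
  have hdiff : U n p k v σ B - U n p k v π B
      = marginalUtility p k v σ a + marginalUtility p k v σ b
        - (marginalUtility p k v π a + marginalUtility p k v π b) := by
    simp only [U_eq_sum_marginalUtility, ← sum_sub_distrib]
    rw [Fintype.sum_eq_add a b hne]
    · rw [if_pos (by omega), if_pos (by omega), if_pos hbB, if_pos hbB]
      ring
    · rintro t ⟨hta, htb⟩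
      have hσt : σ t = π t := by simp [σ, Equiv.swap_apply_of_ne_of_ne hta htb]
      simp only [marginalUtility, hσt, hlam t (fun h => htb (Fin.ext h)), sub_self]
  have hσa : σ a = π b := by simp [σ]
  have hσb : σ b = π a := by simp [σ]
  simp only [marginalUtility, hlam_b σ, hlam_b π, hlam a (by omega), hσa, hσb] at hdiff
  linarith

lemma U_le_U_swap_trans_of_val_succ_eq {a b : Fin n} (hab : b.val = a.val + 1) {B : ℕ}
    (hbB : b.val < B) {π : Equiv.Perm (Fin n)}
    (hratio : p (π a) * k (π b) ≤ p (π b) * k (π a)) :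
    U n p k v π B ≤ U n p k v ((Equiv.swap a b).trans π) B := by
  rw [U_swap_trans_of_val_succ_eq p k v hab hbB]
  linarith

variable {α : Type*} [LinearOrder α] {cls : Fin n → α}

lemma exists_U_le_of_isMax_cls_at (horder : ∀ i j, cls i ≤ cls j → p j * k i ≤ p i * k j)
    (e : Fin n) (π : Equiv.Perm (Fin n)) (s : Fin n) (hse : s ≤ e)
    (hmax : ∀ t ≤ e, cls (π t) ≤ cls (π s)) :
    ∃ π' : Equiv.Perm (Fin n), U n p k v π (e.val + 1) ≤ U n p k v π' (e.val + 1) ∧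
      ∀ t ≤ e, cls (π' t) ≤ cls (π' e) := by
  obtain ⟨d, hd⟩ : ∃ d, e.val - s.val = d := ⟨_, rfl⟩
  induction d generalizing π s with
  | zero =>
    obtain rfl : s = e := le_antisymm hse (Fin.le_def.mpr (by omega))
    exact ⟨π, le_rfl, hmax⟩
  | succ d ih =>
    set b : Fin n := ⟨s.val + 1, by omega⟩
    have hbe : b ≤ e := Fin.le_def.mpr (by simp only [b]; omega)
    have hswap_le : ∀ t ≤ e, Equiv.swap s b t ≤ e := by
      intro t ht
      rw [Equiv.swap_apply_def]
      split_ifs <;> assumption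
    obtain ⟨π', hle, hlast⟩ := ih ((Equiv.swap s b).trans π) b hbe
      (fun t ht => by simpa using hmax _ (hswap_le t ht)) (by simp only [b]; omega)
    refine ⟨π', le_trans ?_ hle, hlast⟩
    exact U_le_U_swap_trans_of_val_succ_eq p k v rfl (by simp only [b]; omega)
      (horder _ _ (hmax b hbe))

lemma exists_U_le_of_forall_cls_le_last
    (horder : ∀ i j, cls i ≤ cls j → p j * k i ≤ p i * k j)
    (π : Equiv.Perm (Fin n)) (e : Fin n) :
    ∃ π' : Equiv.Perm (Fin n), U n p k v π (e.val + 1) ≤ U n p k v π' (e.val + 1) ∧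
      ∀ t ≤ e, cls (π' t) ≤ cls (π' e) := by
  obtain ⟨s, hs, hmax⟩ := (Iic e).exists_max_image (fun t => cls (π t)) ⟨e, mem_Iic.mpr le_rfl⟩
  exact exists_U_le_of_isMax_cls_at p k v horder e π s (mem_Iic.mp hs)
    (fun t ht => hmax t (mem_Iic.mpr ht))

lemma exists_U_succ_eq_of_le_symm_val (π : Equiv.Perm (Fin n)) {B : ℕ} (i : Fin n)
    (hi : B ≤ (π.symm i).val) :
    ∃ σ : Equiv.Perm (Fin n),
      U n p k v σ (B + 1) = U n p k v π B + (v * p i - k i * (1 - lam n p π B)) := by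
  have hB : B < n := lt_of_le_of_lt hi (π.symm i).isLt
  set y : Fin n := ⟨B, hB⟩
  set σ := (Equiv.swap (π.symm i) y).trans π
  have hagree : ∀ t : Fin n, t.val < B → σ t = π t := by
    intro t ht
    have hti : t ≠ π.symm i := fun h => by rw [h] at ht; omega
    have hty : t ≠ y := fun h => by rw [h] at ht; simp [y] at ht
    simp [σ, Equiv.swap_apply_of_ne_of_ne hti hty]
  have hσy : σ y = i := by simp [σ]
  refine ⟨σ, ?_⟩
  rw [U_succ p k v σ hB, U_congr_of_eq_below p k v hagree, marginalUtility, hσy,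
    lam_congr_of_eq_below p hagree le_rfl]

lemma exists_U_le_of_ratio_le_last (hp : ∀ i, 0 ≤ p i) (hk : ∀ i, 0 < k i) (hv : 0 ≤ v)
    (π : Equiv.Perm (Fin n)) (e : Fin n) (he : 0 ≤ marginalUtility p k v π e) (i : Fin n)
    (hi : e.val < (π.symm i).val) (hratio : p (π e) * k i ≤ p i * k (π e)) :
    ∃ σ : Equiv.Perm (Fin n), U n p k v π (e.val + 1) ≤ U n p k v σ (e.val + 2) := by
  obtain ⟨σ, hσ⟩ := exists_U_succ_eq_of_le_symm_val p k v π (B := e.val + 1) i hi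
  refine ⟨σ, ?_⟩
  rw [hσ, le_add_iff_nonneg_right, lam_succ p π e.isLt]
  exact marginal_nonneg_of_ratio_le hv (hp _) (hk _) (hk i).le hratio he

end Utility

theorem stmt_11_general (n m : ℕ) (p k : Fin n → ℝ) (v : ℝ)
    (hp : ∀ i, 0 ≤ p i) (hk : ∀ i, 0 < k i) (hv : 0 ≤ v)
    (cls : Fin n → Fin m)
    (horder : ∀ i j : Fin n, cls i ≤ cls j → p i * k j ≥ p j * k i) :
    ∃ (π : Equiv.Perm (Fin n)) (B : ℕ), B ≤ n ∧
      (∀ (π' : Equiv.Perm (Fin n)) (B' : ℕ), B' ≤ n →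
        U n p k v π B ≥ U n p k v π' B') ∧
      (∃ t ≤ m, B = ∑ c ∈ Finset.univ.filter (fun c : Fin m => c.val < t),
        (Finset.univ.filter (fun i : Fin n => cls i = c)).card) := by
  classical
  obtain ⟨π₀, B, hBn, hopt, hBmax⟩ := exists_forall_le_of_max_budget (U n p k v) n
  rcases B with _ | B
  · exact ⟨π₀, 0, hBn, hopt, 0, m.zero_le, by simp⟩
  set e : Fin n := ⟨B, by omega⟩
  obtain ⟨π, hle, hlast⟩ := exists_U_le_of_forall_cls_le_last p k v horder π₀ e
  have hπopt : ∀ π' B', B' ≤ n → U n p k v π' B' ≤ U n p k v π (B + 1) :=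
    fun π' B' h => (hopt π' B' h).trans hle
  have hmarg : 0 ≤ marginalUtility p k v π e := by
    linarith [U_succ p k v π e.isLt, hπopt π B (by omega)]
  have hguessed : ∀ i, (π.symm i).val < B + 1 ↔ cls i ≤ cls (π e) := by
    refine fun i => ⟨fun h => ?_, fun hi => ?_⟩
    · simpa using hlast (π.symm i) (Fin.le_def.mpr (by simp [e]; omega))
    by_contra h
    obtain ⟨σ, hσ⟩ := exists_U_le_of_ratio_le_last p k v hp hk hv π e hmarg i
      (by simp [e]; omega) (horder _ _ hi)
    have := hBmax σ (B + 2) (by omega) (le_antisymm (hopt σ _ (by omega)) (hle.trans hσ))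
    omega
  refine ⟨π, B + 1, hBn, hπopt, (cls (π e)).val + 1, (cls (π e)).isLt, ?_⟩
  rw [← card_filter_le_eq_sum_card_fiber, ← filter_congr fun i _ => hguessed i,
    card_filter_symm_val_lt π hBn]

theorem stmt_11 (n m : ℕ) (p k : Fin n → ℝ) (v : ℝ)
    (hp : ∀ i, 0 ≤ p i) (hpsum : ∑ i, p i ≤ 1) (hk : ∀ i, 0 < k i) (hv : 0 ≤ v)
    (cls : Fin n → Fin m)
    (hcls : ∀ i j, cls i = cls j → p i = p j ∧ k i = k j)
    (horder : ∀ i j : Fin n, cls i ≤ cls j → p i * k j ≥ p j * k i) :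
    ∃ (π : Equiv.Perm (Fin n)) (B : ℕ), B ≤ n ∧
      (∀ (π' : Equiv.Perm (Fin n)) (B' : ℕ), B' ≤ n →
        U n p k v π B ≥ U n p k v π' B') ∧
      (∃ t ≤ m, B = ∑ c ∈ Finset.univ.filter (fun c : Fin m => c.val < t),
        (Finset.univ.filter (fun i : Fin n => cls i = c)).card) :=
  stmt_11_general n m p k v hp hk hv cls horder
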